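/- arXiv:2407.14764 — 2 statements merged into one kernel-verified Lean document; each statement's English description precedes it below -/
import Mathlib

section
/- For every k ∈ ℕ there exists a nonnegative integer matrix M with rank₊(M) = 2 and rank_{ℤ₊}(M) ≥ k. In particular, the ratio rank₊(M)/rank_{ℤ₊}(M) over nonnegative integer matrices M can be made arbitrarily close to zero, even when restricted to matrices with rank₊(M) = 2. -/
open Matrix BigOperators

noncomputable section

/-- The ambient space `ℝ^n`. -/
abbrev V (n : ℕ) := Fin n → ℝ

/-- The difference set `Λ_Γ = {x - y : x, y ∈ Γ}` of a set `Γ ⊆ ℝ^n`. -/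
def diffSet {n : ℕ} (Γ : Set (V n)) : Set (V n) := {z | ∃ x ∈ Γ, ∃ y ∈ Γ, z = x - y}

/-- A set is discrete if each of its points is isolated in it. -/
def IsDiscreteSet {n : ℕ} (Λ : Set (V n)) : Prop :=
  ∀ x ∈ Λ, ∃ ε : ℝ, 0 < ε ∧ ∀ y ∈ Λ, dist y x < ε → y = x

/-- An affine semigroup: a finitely generated additive submonoid of `ℝ^n` whose
difference group is discrete (a lattice). -/
def IsAffineSemigroup {n : ℕ} (Γ : Set (V n)) : Prop :=
  (∃ S : Finset (V n), (AddSubmonoid.closure (S : Set (V n)) : Set (V n)) = Γ) ∧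
    IsDiscreteSet (diffSet Γ)

/-- A set is positive if `0` is its only element whose negative also belongs to it. -/
def IsPositive {n : ℕ} (Γ : Set (V n)) : Prop := ∀ x ∈ Γ, -x ∈ Γ → x = 0

/-- The convex cone `K_Γ` of all nonnegative real combinations of elements of `Γ`. -/
def coneOf {n : ℕ} (Γ : Set (V n)) : Set (V n) :=
  {y | ∃ (k : ℕ) (c : Fin k → ℝ) (v : Fin k → V n),
    (∀ i, 0 ≤ c i) ∧ (∀ i, v i ∈ Γ) ∧ y = ∑ i, c i • v i}

/-- The dual cone `K* = {y : ⟨x,y⟩ ≥ 0 for all x ∈ K}`. -/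
def dualCone {n : ℕ} (K : Set (V n)) : Set (V n) := {y | ∀ x ∈ K, 0 ≤ x ⬝ᵥ y}

/-- The dual lattice `Λ* = {w ∈ span(Λ) : ⟨w,v⟩ ∈ ℤ for all v ∈ Λ}`. -/
def dualLattice {n : ℕ} (Λ : Set (V n)) : Set (V n) :=
  {w | w ∈ Submodule.span ℝ Λ ∧ ∀ v ∈ Λ, ∃ m : ℤ, w ⬝ᵥ v = (m : ℝ)}

/-- The dual affine semigroup `Γ* = (Λ_Γ)* ∩ (K_Γ)*`. -/
def dualSemigroup {n : ℕ} (Γ : Set (V n)) : Set (V n) :=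
  dualLattice (diffSet Γ) ∩ dualCone (coneOf Γ)

/-- `A` generates the additive monoid `Γ`. -/
def IsGenSet {n : ℕ} (A Γ : Set (V n)) : Prop := (AddSubmonoid.closure A : Set (V n)) = Γ

/-- `A` is a minimal generating set of the additive monoid `Γ`: it generates, and no
proper subset of it generates. -/
def IsMinGenSet {n : ℕ} (A Γ : Set (V n)) : Prop :=
  IsGenSet A Γ ∧ ∀ B ⊂ A, ¬ IsGenSet B Γ

/-- `S` is the slack matrix of the positive affine semigroup `Γ`: its `(i,j)` entry is
`⟨a i, b j⟩` where `a`, `b` enumerate the minimal generating sets of `Γ` and `Γ*`. -/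
def IsSlackMatrix {n k l : ℕ} (Γ : Set (V n)) (S : Matrix (Fin k) (Fin l) ℤ) : Prop :=
  ∃ (a : Fin k → V n) (b : Fin l → V n),
    Function.Injective a ∧ Function.Injective b ∧
    IsMinGenSet (Set.range a) Γ ∧ IsMinGenSet (Set.range b) (dualSemigroup Γ) ∧
    ∀ i j, (S i j : ℝ) = a i ⬝ᵥ b j

/-- The `i`-th row of an integer matrix, viewed as a real vector. -/
def rowVec {k l : ℕ} (S : Matrix (Fin k) (Fin l) ℤ) (i : Fin k) : V l := fun j => (S i j : ℝ)

/-- The `j`-th column of an integer matrix, viewed as a real vector. -/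
def colVec {k l : ℕ} (S : Matrix (Fin k) (Fin l) ℤ) (j : Fin l) : V k := fun i => (S i j : ℝ)

/-- `Γ_S^row`: all nonnegative integer combinations of the rows of `S`. -/
def GammaRow {k l : ℕ} (S : Matrix (Fin k) (Fin l) ℤ) : Set (V l) :=
  {x | ∃ c : Fin k → ℕ, x = ∑ i, (c i : ℝ) • rowVec S i}

/-- `Γ_S^col`: all nonnegative integer combinations of the columns of `S`. -/
def GammaCol {k l : ℕ} (S : Matrix (Fin k) (Fin l) ℤ) : Set (V k) :=
  {x | ∃ c : Fin l → ℕ, x = ∑ j, (c j : ℝ) • colVec S j}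

/-- `Λ_S^row`: all integer combinations of the rows of `S`. -/
def LambdaRow {k l : ℕ} (S : Matrix (Fin k) (Fin l) ℤ) : Set (V l) :=
  {x | ∃ c : Fin k → ℤ, x = ∑ i, (c i : ℝ) • rowVec S i}

/-- `Λ_S^col`: all integer combinations of the columns of `S`. -/
def LambdaCol {k l : ℕ} (S : Matrix (Fin k) (Fin l) ℤ) : Set (V k) :=
  {x | ∃ c : Fin l → ℤ, x = ∑ j, (c j : ℝ) • colVec S j}

/-- `K_S^row`: all nonnegative real combinations of the rows of `S`. -/
def KRow {k l : ℕ} (S : Matrix (Fin k) (Fin l) ℤ) : Set (V l) :=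
  {x | ∃ c : Fin k → ℝ, (∀ i, 0 ≤ c i) ∧ x = ∑ i, c i • rowVec S i}

/-- `K_S^col`: all nonnegative real combinations of the columns of `S`. -/
def KCol {k l : ℕ} (S : Matrix (Fin k) (Fin l) ℤ) : Set (V k) :=
  {x | ∃ c : Fin l → ℝ, (∀ j, 0 ≤ c j) ∧ x = ∑ j, c j • colVec S j}

/-- `Row(S)`: the row space of `S` over `ℝ`. -/
def RowSpace {k l : ℕ} (S : Matrix (Fin k) (Fin l) ℤ) : Set (V l) :=
  (Submodule.span ℝ (Set.range (rowVec S)) : Set (V l))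

/-- `Col(S)`: the column space of `S` over `ℝ`. -/
def ColSpace {k l : ℕ} (S : Matrix (Fin k) (Fin l) ℤ) : Set (V k) :=
  (Submodule.span ℝ (Set.range (colVec S)) : Set (V k))

/-- `ℤ^l` viewed inside `ℝ^l`. -/
def intPts (l : ℕ) : Set (V l) := {x | ∀ j, ∃ m : ℤ, x j = (m : ℝ)}

/-- `ℤ₊^l` viewed inside `ℝ^l`. -/
def nnIntPts (l : ℕ) : Set (V l) := {x | ∀ j, ∃ m : ℕ, x j = (m : ℝ)}

/-- `ℝ₊^l`: the nonnegative orthant. -/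
def nnPts (l : ℕ) : Set (V l) := {x | ∀ j, 0 ≤ x j}

/-- `ι` (a linear map restricting to an additive semigroup homomorphism `Γ → Γ'`) is a
lift of the positive affine semigroup `Γ`: `Γ'` is a positive affine semigroup and the
adjoint `ι*` (characterized on `Γ` by `⟨x, ι*(y)⟩ = ⟨ι(x), y⟩`) satisfies
`ι*(Γ'*) = Γ*`. -/
structure IsLift {n N : ℕ} (Γ : Set (V n)) (Γ' : Set (V N)) (ι : (V n) →ₗ[ℝ] (V N)) : Prop where
  lift_semigroup : IsAffineSemigroup Γ'
  lift_positive : IsPositive Γ'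
  maps_to : ∀ x ∈ Γ, ι x ∈ Γ'
  adjoint_mem : ∀ y ∈ dualSemigroup Γ', ∃ z ∈ dualSemigroup Γ, ∀ x ∈ Γ, x ⬝ᵥ z = (ι x) ⬝ᵥ y
  adjoint_surj : ∀ z ∈ dualSemigroup Γ, ∃ y ∈ dualSemigroup Γ', ∀ x ∈ Γ, x ⬝ᵥ z = (ι x) ⬝ᵥ y

/-- The nonnegative integer rank: the least inner dimension of a factorization
`A = B * C` with `B`, `C` nonnegative integer matrices. -/
def nnIntRank {m l : Type*} [Fintype m] [Fintype l] (A : Matrix m l ℤ) : ℕ :=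
  sInf {r : ℕ | ∃ (B : Matrix m (Fin r) ℤ) (C : Matrix (Fin r) l ℤ),
    (∀ i j, 0 ≤ B i j) ∧ (∀ i j, 0 ≤ C i j) ∧ A = B * C}

/-- The nonnegative rank: the least inner dimension of a factorization
`A = B * C` with `B`, `C` nonnegative real matrices. -/
def nnRank {m l : Type*} [Fintype m] [Fintype l] (A : Matrix m l ℤ) : ℕ :=
  sInf {r : ℕ | ∃ (B : Matrix m (Fin r) ℝ) (C : Matrix (Fin r) l ℝ),
    (∀ i j, 0 ≤ B i j) ∧ (∀ i j, 0 ≤ C i j) ∧ A.map (fun z => (z : ℝ)) = B * C}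

/-- The Fibonacci semigroup `Γ^Fib_n = ℤ² ∩ {(x,y) : 0 ≤ F_{2n}·y ≤ F_{2n+2}·x}`
(with `Nat.fib`, so `F 1 = F 2 = 1`). -/
def GammaFib (n : ℕ) : Set (V 2) :=
  {p | (∃ a : ℤ, p 0 = (a : ℝ)) ∧ (∃ b : ℤ, p 1 = (b : ℝ)) ∧
    0 ≤ (Nat.fib (2 * n) : ℝ) * p 1 ∧
    (Nat.fib (2 * n) : ℝ) * p 1 ≤ (Nat.fib (2 * n + 2) : ℝ) * p 0}

/-- Fibonacci numbers extended to negative indices by `F_{-m} = (-1)^{m+1} F_m`. -/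
def fibZ (m : ℤ) : ℤ :=
  if 0 ≤ m then (Nat.fib m.toNat : ℤ)
  else (-1) ^ ((-m).toNat + 1) * (Nat.fib (-m).toNat : ℤ)

/-- The `(n+1) × (n+1)` Toeplitz matrix with `(i,j)` entry `F_{2(i-j)+1}`. -/
def Mfib (n : ℕ) : Matrix (Fin (n + 1)) (Fin (n + 1)) ℤ :=
  fun i j => fibZ (2 * ((i : ℤ) - (j : ℤ)) + 1)

/-- `‖A‖₁`: the sum of all entries of a matrix. -/
def entrySum {m l : Type*} [Fintype m] [Fintype l] (A : Matrix m l ℤ) : ℤ := ∑ i, ∑ j, A i j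

/-!
The witness is the Fibonacci Toeplitz matrix `Mfib n = (F_{2(i-j)+1})ᵢⱼ`. The identity
`F_{2n} F_{2(i-j)+1} = F_{2(n-i)} F_{1-2j} + F_{2i} F_{2(n-j)+1}` writes `F_{2n} • Mfib n` as the
product of the nonnegative columns `(F_{2(n-i)}, F_{2i})` and rows `(F_{1-2j}, F_{2(n-j)+1})`,
and the corner `!![1, 1; 2, 1]` is nonsingular, so `rank₊ (Mfib n) = 2`.

In a factorization `A = B * C` over `ℤ₊` of a matrix with unit diagonal, each diagonal entry
`1 = ∑ₛ B i s * C s i` is carried by a single index `α i`. Two rows with the same `α` and the same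
support in `B` satisfy `A i j = A j i = 1`, which for `Mfib n` forces `i = j` because
`F_{2d+1} ≥ 2` for `d ≥ 1`. Hence `n + 1 ≤ r * 2 ^ r` for every inner dimension `r`.
-/

theorem Int.fib_add_mul_fib_of_even {q : ℤ} (hq : Even q) (p x : ℤ) :
    Int.fib (p + q) * Int.fib x = Int.fib q * Int.fib (x + p) + Int.fib p * Int.fib (x - q) := by
  have hq1 : ¬Even (q + 1) := Int.even_add_one.not.2 (not_not.2 hq)
  have hneg : Int.fib (-q) = -Int.fib q := by rw [Int.fib_neg, if_pos hq]
  have hneg1 : Int.fib (-q - 1) = Int.fib (q + 1) := by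
    rw [show -q - 1 = -(q + 1) by ring, Int.fib_neg, if_neg hq1]
  rw [add_comm x, sub_eq_neg_add, Int.fib_add p q, Int.fib_add p x, Int.fib_add (-q) x, hneg,
    hneg1]
  ring

theorem exists_mul_eq_one_of_sum_mul_eq_one {ι : Type*} [Fintype ι] {f g : ι → ℤ}
    (hf : ∀ s, 0 ≤ f s) (hg : ∀ s, 0 ≤ g s) (hsum : ∑ s, f s * g s = 1) :
    ∃ s, f s = 1 ∧ g s = 1 ∧ ∀ t ≠ s, f t * g t = 0 := by
  classical
  have hfg : ∀ s, 0 ≤ f s * g s := fun s => mul_nonneg (hf s) (hg s)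
  obtain ⟨s, -, hs⟩ :=
    Finset.exists_ne_zero_of_sum_ne_zero (s := Finset.univ) (by rw [hsum]; exact one_ne_zero)
  have hle : f s * g s ≤ 1 := hsum ▸ Finset.single_le_sum (fun t _ => hfg t) (Finset.mem_univ s)
  have hone : f s * g s = 1 := by have := hfg s; omega
  refine ⟨s, Int.eq_one_of_mul_eq_one_right (hf s) hone, Int.eq_one_of_mul_eq_one_left (hg s) hone,
    fun t ht => ?_⟩
  have hrest : ∑ t ∈ Finset.univ.erase s, f t * g t = 0 := by
    rw [← Finset.add_sum_erase _ _ (Finset.mem_univ s)] at hsum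
    omega
  exact (Finset.sum_eq_zero_iff_of_nonneg (fun t _ => hfg t)).1 hrest t
    (Finset.mem_erase.2 ⟨ht, Finset.mem_univ t⟩)

section NonnegIntFactorization

variable {m ι : Type*} [Fintype m] [Fintype ι]

theorem card_le_mul_two_pow_of_eq_mul {A : Matrix m m ℤ} {B : Matrix m ι ℤ} {C : Matrix ι m ℤ}
    (hB : ∀ i s, 0 ≤ B i s) (hC : ∀ s j, 0 ≤ C s j) (hBC : A = B * C)
    (hdiag : ∀ i, A i i = 1) (hsep : ∀ i j, A i j = 1 → A j i = 1 → i = j) :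
    Fintype.card m ≤ Fintype.card ι * 2 ^ Fintype.card ι := by
  classical
  have hunit : ∀ i, ∃ s, B i s = 1 ∧ C s i = 1 ∧ ∀ t ≠ s, B i t * C t i = 0 := fun i =>
    exists_mul_eq_one_of_sum_mul_eq_one (hB i) (fun s => hC s i)
      (by rw [← Matrix.mul_apply, ← hBC, hdiag])
  choose α hBα hCα hα using hunit
  let support (i : m) : Finset ι := Finset.univ.filter (B i · ≠ 0)
  have hone : ∀ i j, α i = α j → support i = support j → A i j = 1 := by
    intro i j hα_eq hsupp
    rw [hBC, Matrix.mul_apply, Finset.sum_eq_single (α j), hCα, ← hα_eq, hBα, mul_one]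
    · intro t _ ht
      by_cases hit : B i t = 0
      · rw [hit, zero_mul]
      · have hjt : B j t ≠ 0 := by
          simpa [support, hsupp] using (show t ∈ support i by simpa [support] using hit)
        rw [(mul_eq_zero.1 (hα j t ht)).resolve_left hjt, mul_zero]
    · exact fun h => absurd (Finset.mem_univ _) h
  have hinj : Function.Injective fun i => (α i, support i) := fun i j hij => by
    simp only [Prod.mk.injEq] at hij
    exact hsep i j (hone i j hij.1 hij.2) (hone j i hij.1.symm hij.2.symm)
  simpa [Fintype.card_prod, Fintype.card_finset] using Fintype.card_le_of_injective _ hinj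

theorem card_le_nnIntRank_mul_two_pow {A : Matrix m m ℤ} (hA : ∀ i j, 0 ≤ A i j)
    (hdiag : ∀ i, A i i = 1) (hsep : ∀ i j, A i j = 1 → A j i = 1 → i = j) :
    Fintype.card m ≤ nnIntRank A * 2 ^ nnIntRank A := by
  classical
  let e := Fintype.equivFin m
  have hne : {r : ℕ | ∃ (B : Matrix m (Fin r) ℤ) (C : Matrix (Fin r) m ℤ),
      (∀ i j, 0 ≤ B i j) ∧ (∀ i j, 0 ≤ C i j) ∧ A = B * C}.Nonempty := by
    refine ⟨_, A.submatrix id e.symm, (1 : Matrix m m ℤ).submatrix e.symm id,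
      fun i j => hA i _, fun i j => ?_, ?_⟩
    · simp only [Matrix.submatrix_apply, Matrix.one_apply]; split_ifs <;> simp
    · rw [Matrix.submatrix_mul_equiv, Matrix.mul_one, Matrix.submatrix_id_id]
  obtain ⟨B, C, hB, hC, hBC⟩ := Nat.sInf_mem hne
  have := card_le_mul_two_pow_of_eq_mul hB hC hBC hdiag hsep
  rwa [Fintype.card_fin] at this

end NonnegIntFactorization

theorem fibZ_eq_fib : fibZ = Int.fib := by
  funext m
  obtain ⟨n, rfl | rfl⟩ := m.eq_nat_or_neg
  · simp [fibZ]
  · rcases n.eq_zero_or_pos with rfl | _ <;> simp [fibZ, Int.fib_neg_natCast]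

theorem Mfib_apply (n : ℕ) (i j : Fin (n + 1)) :
    Mfib n i j = Int.fib (2 * ((i : ℤ) - j) + 1) := by
  rw [Mfib, fibZ_eq_fib]

theorem Mfib_pos (n : ℕ) (i j : Fin (n + 1)) : 0 < Mfib n i j := by
  rw [Mfib_apply]; exact Int.fib_two_mul_add_one_pos

theorem Mfib_self (n : ℕ) (i : Fin (n + 1)) : Mfib n i i = 1 := by
  simp [Mfib_apply]

theorem two_le_Mfib_of_lt (n : ℕ) {i j : Fin (n + 1)} (hji : j < i) : 2 ≤ Mfib n i j := by
  rw [Mfib_apply, Int.fib_two_mul_add_one_eq_natFib_natAbs]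
  have h3 : 3 ≤ (2 * ((i : ℤ) - j) + 1).natAbs := by
    have : (j : ℕ) < i := hji
    omega
  exact_mod_cast Nat.fib_mono h3

theorem eq_of_Mfib_eq_one (n : ℕ) {i j : Fin (n + 1)} (hij : Mfib n i j = 1)
    (hji : Mfib n j i = 1) : i = j := by
  rcases lt_trichotomy i j with h | h | h
  · linarith [two_le_Mfib_of_lt n h]
  · exact h
  · linarith [two_le_Mfib_of_lt n h]

theorem exists_nnFactorization_Mfib (n : ℕ) :
    ∃ (B : Matrix (Fin (n + 2)) (Fin 2) ℝ) (C : Matrix (Fin 2) (Fin (n + 2)) ℝ),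
      (∀ i t, 0 ≤ B i t) ∧ (∀ t j, 0 ≤ C t j) ∧
        (Mfib (n + 1)).map (fun z => (z : ℝ)) = B * C := by
  set N : ℤ := n + 1
  have fib_even_nonneg : ∀ m : ℤ, 0 ≤ m → (0 : ℝ) ≤ Int.fib (2 * m) := fun m hm => by
    rw [Int.fib_of_nonneg (by omega)]; positivity
  have hN : (0 : ℝ) < Int.fib (2 * N) := by
    rw [Int.fib_of_nonneg (by omega)]
    exact_mod_cast Nat.fib_pos.2 (by omega)
  refine ⟨Matrix.of fun i => ![(Int.fib (2 * (N - i)) : ℝ) / Int.fib (2 * N),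
      (Int.fib (2 * i) : ℝ) / Int.fib (2 * N)],
    Matrix.of ![fun j => (Int.fib (2 * (0 - j) + 1) : ℝ),
      fun j => (Int.fib (2 * (N - j) + 1) : ℝ)],
    ?_, ?_, ?_⟩
  · intro i t
    have : (i : ℤ) ≤ N := by omega
    fin_cases t <;>
      simp only [Matrix.of_apply, Fin.zero_eta, Fin.mk_one, Matrix.cons_val_zero,
        Matrix.cons_val_one] <;>
      exact div_nonneg (fib_even_nonneg _ (by omega)) hN.le
  · intro t j
    fin_cases t <;>
      simp only [Matrix.of_apply, Fin.zero_eta, Fin.mk_one, Matrix.cons_val_zero,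
        Matrix.cons_val_one] <;>
      exact_mod_cast Int.fib_two_mul_add_one_pos.le
  · ext i j
    have key :=
      Int.fib_add_mul_fib_of_even (even_two_mul (i : ℤ)) (2 * (N - i)) (2 * (i - j) + 1)
    rw [show 2 * (N - i) + 2 * i = 2 * N by ring,
      show 2 * (i - j) + 1 + 2 * (N - i) = 2 * (N - j) + 1 by ring,
      show 2 * ((i : ℤ) - j) + 1 - 2 * i = 2 * (0 - j) + 1 by ring] at key
    simp only [Matrix.map_apply, Mfib_apply, Matrix.mul_apply, Matrix.of_apply, Fin.sum_univ_two,
      Matrix.cons_val_zero, Matrix.cons_val_one]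
    rw [div_mul_eq_mul_div, div_mul_eq_mul_div, ← add_div, eq_div_iff hN.ne']
    have := congrArg (Int.cast : ℤ → ℝ) key
    push_cast at this
    linear_combination this

theorem nnRank_Mfib (n : ℕ) : nnRank (Mfib (n + 1)) = 2 := by
  obtain ⟨B₀, C₀, hB₀, hC₀, hBC₀⟩ := exists_nnFactorization_Mfib n
  refine IsLeast.csInf_eq ⟨⟨B₀, C₀, hB₀, hC₀, hBC₀⟩, ?_⟩
  rintro r ⟨B, C, -, -, hBC⟩
  let corner : Fin 2 → Fin (n + 2) := ![0, 1]
  have hcorner :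
      ((Mfib (n + 1)).map (fun z => (z : ℝ))).submatrix corner corner = !![1, 1; 2, 1] := by
    ext i j
    fin_cases i <;> fin_cases j <;> simp [corner, Mfib_apply, show Int.fib 3 = 2 by rfl]
  have hunit : IsUnit (!![1, 1; 2, 1] : Matrix (Fin 2) (Fin 2) ℝ) := by
    rw [Matrix.isUnit_iff_isUnit_det, Matrix.det_fin_two_of]
    norm_num
  calc 2 = (!![1, 1; 2, 1] : Matrix (Fin 2) (Fin 2) ℝ).rank := by
        rw [Matrix.rank_of_isUnit _ hunit, Fintype.card_fin]
    _ ≤ ((Mfib (n + 1)).map (fun z => (z : ℝ))).rank := by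
        rw [← hcorner]; exact Matrix.rank_submatrix_le _ _ _
    _ ≤ B.rank := by rw [hBC]; exact Matrix.rank_mul_le_left B C
    _ ≤ r := Matrix.rank_le_width B

theorem le_nnIntRank_Mfib (k : ℕ) : k ≤ nnIntRank (Mfib (k * 2 ^ k + 1)) := by
  have hcard := card_le_nnIntRank_mul_two_pow (fun i j => (Mfib_pos (k * 2 ^ k + 1) i j).le)
    (Mfib_self _) (fun i j => eq_of_Mfib_eq_one _)
  rw [Fintype.card_fin] at hcard
  by_contra! hlt
  have : nnIntRank (Mfib (k * 2 ^ k + 1)) * 2 ^ nnIntRank (Mfib (k * 2 ^ k + 1)) ≤ k * 2 ^ k :=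
    Nat.mul_le_mul hlt.le (Nat.pow_le_pow_right two_pos hlt.le)
  omega

/-- For every `k` there is a nonnegative integer matrix with nonnegative
rank `2` and nonnegative integer rank at least `k`; in particular the ratio
`rank₊/rank_{ℤ₊}` can be made arbitrarily close to zero, even among matrices of
nonnegative rank `2`. -/
theorem nnRank_nnIntRank_gap :
    (∀ k : ℕ, ∃ (a b : ℕ) (M : Matrix (Fin a) (Fin b) ℤ),
      (∀ i j, 0 ≤ M i j) ∧ nnRank M = 2 ∧ k ≤ nnIntRank M) ∧
    (∀ ε : ℝ, 0 < ε → ∃ (a b : ℕ) (M : Matrix (Fin a) (Fin b) ℤ),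
      (∀ i j, 0 ≤ M i j) ∧ nnRank M = 2 ∧ (nnRank M : ℝ) / (nnIntRank M : ℝ) < ε) := by
  have hgap : ∀ k : ℕ, ∃ (a b : ℕ) (M : Matrix (Fin a) (Fin b) ℤ),
      (∀ i j, 0 ≤ M i j) ∧ nnRank M = 2 ∧ k ≤ nnIntRank M := fun k =>
    ⟨_, _, Mfib (k * 2 ^ k + 1), fun i j => (Mfib_pos _ i j).le, nnRank_Mfib _,
      le_nnIntRank_Mfib k⟩
  refine ⟨hgap, fun ε hε => ?_⟩
  obtain ⟨k, hk⟩ := exists_nat_gt (2 / ε)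
  obtain ⟨a, b, M, hM, hrank, hkM⟩ := hgap k
  refine ⟨a, b, M, hM, hrank, ?_⟩
  have hkM' : (k : ℝ) ≤ nnIntRank M := by exact_mod_cast hkM
  have hk0 : (0 : ℝ) < k := (div_pos two_pos hε).trans hk
  rw [hrank, Nat.cast_two, div_lt_iff₀ (hk0.trans_le hkM')]
  calc 2 < ε * k := by rwa [div_lt_iff₀' hε] at hk
    _ ≤ ε * nnIntRank M := by gcongr

end
end

section
/- For every k ∈ ℕ there exists a 2-dimensional positive affine semigroup Γ (i.e. span(Γ) has dimension 2) such that every lift of Γ has size at least k. -/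
/-!
Let `u = 3 + 2√2`, a solution of `x² - 2y² = 1`, and let `Γ` be generated by the points
`pᵢ = (xᵢ, yᵢ)` of `uⁱ`, `i < m`. The points `qⱼ = (x, 2y)` of `u⁻ʲ` lie in `Γ*` and
`⟨pᵢ, qⱼ⟩` is the `x`-coordinate of `uⁱ⁻ʲ`, which is `1` exactly when `i = j`.
If a lift has a minimal generating set of size `r`, writing `ι(pᵢ)` in the generators and
pairing them with preimages of the `qⱼ` under `ι*` factors this `m × m` matrix as a product of
natural matrices of inner dimension `r`. Such a factorization of a matrix that equals `1`
exactly on the diagonal forces `m ≤ r 2ʳ`, so `m > k 2ᵏ` gives `r ≥ k`.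
-/

open Matrix BigOperators

noncomputable section

lemma Finset.exists_eq_one_of_sum_eq_one {α : Type*} [DecidableEq α] {s : Finset α} {f : α → ℕ}
    (h : ∑ a ∈ s, f a = 1) : ∃ a ∈ s, f a = 1 ∧ ∀ b ∈ s, b ≠ a → f b = 0 := by
  obtain ⟨a, ha, hfa⟩ := Finset.exists_ne_zero_of_sum_ne_zero (h.trans_ne one_ne_zero)
  have hsplit := Finset.add_sum_erase s f ha
  have hrest : ∑ b ∈ s.erase a, f b = 0 := by omega
  rw [Finset.sum_eq_zero_iff] at hrest
  exact ⟨a, ha, by omega, fun b hb hba => hrest b (Finset.mem_erase.mpr ⟨hba, hb⟩)⟩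

/-- The index `i` is determined by the unique `k` with `P i k * Q k i = 1` together with the
zero pattern of the column `Q · i`. -/
theorem card_le_mul_two_pow_of_mul_eq_one_iff {ι κ : Type*} [Fintype ι] [Fintype κ]
    (P : Matrix ι κ ℕ) (Q : Matrix κ ι ℕ) (h : ∀ i j, (P * Q) i j = 1 ↔ i = j) :
    Fintype.card ι ≤ Fintype.card κ * 2 ^ Fintype.card κ := by
  classical
  have hdiag : ∀ i, ∃ k, (P i k = 1 ∧ Q k i = 1) ∧ ∀ l ≠ k, P i l * Q l i = 0 := fun i => by
    obtain ⟨k, -, hk, hl⟩ := Finset.exists_eq_one_of_sum_eq_one ((h i i).mpr rfl)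
    exact ⟨k, mul_eq_one.mp hk, fun l hlk => hl l (Finset.mem_univ l) hlk⟩
  choose σ hσ hσ' using hdiag
  let zeros : ι → Finset κ := fun i => {k | Q k i = 0}
  have hinj : Function.Injective fun i => (σ i, zeros i) := by
    intro i i' hii'
    obtain ⟨hσii', hzeros⟩ : σ i = σ i' ∧ zeros i = zeros i' := Prod.ext_iff.mp hii'
    refine (h i i').mp ?_
    rw [Matrix.mul_apply, Finset.sum_eq_single (σ i)]
    · rw [(hσ i).1, hσii', (hσ i').2, mul_one]
    · intro l _ hl
      rcases Nat.mul_eq_zero.mp (hσ' i l hl) with hP | hQ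
      · rw [hP, zero_mul]
      · have hl' : l ∈ zeros i' := hzeros ▸ Finset.mem_filter.mpr ⟨Finset.mem_univ l, hQ⟩
        rw [(Finset.mem_filter.mp hl').2, mul_zero]
    · exact fun h => absurd (Finset.mem_univ _) h
  simpa using Fintype.card_le_of_injective _ hinj

section Lifts

variable {n N : ℕ}

theorem IsMinGenSet.finite {A Γ : Set (V n)} (hA : IsMinGenSet A Γ)
    (hΓ : ∃ S : Finset (V n), (AddSubmonoid.closure (S : Set (V n)) : Set (V n)) = Γ) :
    A.Finite := by
  classical
  obtain ⟨S, hS⟩ := hΓ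
  have hsmall : ∀ s ∈ S, ∃ t : Finset (V n), ↑t ⊆ A ∧ s ∈ AddSubmonoid.closure (t : Set (V n)) := by
    intro s hs
    have hsA : s ∈ AddSubmonoid.closure A := by
      rw [← SetLike.mem_coe, hA.1, ← hS]
      exact AddSubmonoid.subset_closure hs
    obtain ⟨f, t, htA, hft, rfl⟩ := AddSubmonoid.mem_closure_iff_exists_finset_subset.mp hsA
    exact ⟨t, htA, AddSubmonoid.mem_closure_finset.mpr ⟨f, hft, rfl⟩⟩
  choose! t htA hst using hsmall
  have hBA : (↑(S.biUnion t) : Set (V n)) ⊆ A := by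
    intro g hg
    obtain ⟨s, hs, hgs⟩ := Finset.mem_biUnion.mp hg
    exact htA s hs hgs
  have hBgen : IsGenSet (↑(S.biUnion t)) Γ := by
    refine subset_antisymm ?_ ?_
    · rw [← hA.1]
      exact AddSubmonoid.closure_mono hBA
    · rw [← hS]
      refine AddSubmonoid.closure_le.mpr fun s hs => ?_
      refine AddSubmonoid.closure_mono ?_ (hst s hs)
      exact Finset.coe_subset.mpr (Finset.subset_biUnion_of_mem t hs)
  by_contra hinf
  exact hA.2 _ (hBA.ssubset_of_ne fun h => hinf (h ▸ Finset.finite_toSet _)) hBgen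

theorem exists_nat_dotProduct_eq_of_mem_dualSemigroup {Γ : Set (V n)} (h0 : (0 : V n) ∈ Γ)
    {x y : V n} (hx : x ∈ Γ) (hy : y ∈ dualSemigroup Γ) : ∃ m : ℕ, x ⬝ᵥ y = m := by
  obtain ⟨m, hm⟩ := hy.1.2 x ⟨x, hx, 0, h0, (sub_zero x).symm⟩
  have hnn : 0 ≤ x ⬝ᵥ y :=
    hy.2 x ⟨1, fun _ => 1, fun _ => x, fun _ => zero_le_one, fun _ => hx, by simp⟩
  rw [dotProduct_comm, hm] at hnn ⊢
  lift m to ℕ using (by exact_mod_cast hnn)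
  exact ⟨m, rfl⟩

theorem IsLift.exists_nat_factorization {Γ : Set (V n)} {Γ' : Set (V N)}
    {ι : V n →ₗ[ℝ] V N} (hι : IsLift Γ Γ' ι) {F : Finset (V N)} (hF : IsGenSet (F : Set (V N)) Γ')
    {I J : Type*} (a : I → V n) (z : J → V n) (ha : ∀ i, a i ∈ Γ)
    (hz : ∀ j, z j ∈ dualSemigroup Γ) :
    ∃ (P : Matrix I F ℕ) (Q : Matrix F J ℕ), ∀ i j, a i ⬝ᵥ z j = ((P * Q) i j : ℝ) := by
  choose y hy hyz using fun j => hι.adjoint_surj (z j) (hz j)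
  have hgen : ∀ g : F, (g : V N) ∈ Γ' := fun g => hF ▸ AddSubmonoid.subset_closure g.2
  have h0 : (0 : V N) ∈ Γ' := hF ▸ AddSubmonoid.zero_mem _
  choose Q hQ using fun (g : F) j =>
    exists_nat_dotProduct_eq_of_mem_dualSemigroup h0 (hgen g) (hy j)
  choose P hP using fun i =>
    AddSubmonoid.mem_closure_finset'.mp (hF.symm ▸ hι.maps_to (a i) (ha i))
  refine ⟨Matrix.of P, Matrix.of Q, fun i j => ?_⟩
  rw [hyz j (a i) (ha i), hP i, sum_dotProduct, Matrix.mul_apply]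
  simp only [← Nat.cast_smul_eq_nsmul ℝ, smul_dotProduct, hQ, smul_eq_mul, Matrix.of_apply,
    Nat.cast_sum, Nat.cast_mul]

theorem IsLift.card_le_ncard_mul_two_pow {Γ : Set (V n)} {Γ' : Set (V N)}
    {ι : V n →ₗ[ℝ] V N} (hι : IsLift Γ Γ' ι) {A : Set (V N)} (hA : IsMinGenSet A Γ')
    {I : Type*} [Fintype I] (a z : I → V n) (ha : ∀ i, a i ∈ Γ)
    (hz : ∀ j, z j ∈ dualSemigroup Γ) (hone : ∀ i j, a i ⬝ᵥ z j = 1 ↔ i = j) :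
    Fintype.card I ≤ A.ncard * 2 ^ A.ncard := by
  classical
  have hfin := hA.finite hι.lift_semigroup.1
  have hF : IsGenSet (hfin.toFinset : Set (V N)) Γ' := by
    rw [hfin.coe_toFinset]
    exact hA.1
  obtain ⟨P, Q, hPQ⟩ := hι.exists_nat_factorization hF a z ha hz
  have hPQ_one : ∀ i j, (P * Q) i j = 1 ↔ i = j := fun i j => by
    rw [← hone, hPQ, Nat.cast_eq_one]
  simpa [Set.ncard_eq_toFinset_card A hfin] using card_le_mul_two_pow_of_mul_eq_one_iff P Q hPQ_one

end Lifts

section Closure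

variable {n : ℕ}

theorem closure_subset_intPts {S : Set (V n)} (hS : S ⊆ intPts n) :
    (AddSubmonoid.closure S : Set (V n)) ⊆ intPts n := by
  intro x hx
  induction hx using AddSubmonoid.closure_induction with
  | mem x hx => exact hS hx
  | zero => exact fun _ => ⟨0, by simp⟩
  | add x y _ _ hx hy =>
    intro j
    obtain ⟨a, ha⟩ := hx j
    obtain ⟨b, hb⟩ := hy j
    exact ⟨a + b, by simp [ha, hb]⟩

theorem diffSet_subset_intPts {Γ : Set (V n)} (hΓ : Γ ⊆ intPts n) : diffSet Γ ⊆ intPts n := by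
  rintro _ ⟨x, hx, y, hy, rfl⟩ j
  obtain ⟨a, ha⟩ := hΓ hx j
  obtain ⟨b, hb⟩ := hΓ hy j
  exact ⟨a - b, by simp [ha, hb]⟩

theorem isDiscreteSet_of_subset_intPts {Λ : Set (V n)} (hΛ : Λ ⊆ intPts n) : IsDiscreteSet Λ := by
  refine fun x hx => ⟨1, one_pos, fun y hy hyx => funext fun j => ?_⟩
  obtain ⟨a, ha⟩ := hΛ hx j
  obtain ⟨b, hb⟩ := hΛ hy j
  have hdist : |((b - a : ℤ) : ℝ)| < 1 := by
    rw [Int.cast_sub, ← hb, ← ha, ← Real.dist_eq]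
    exact (dist_le_pi_dist y x j).trans_lt hyx
  rw [ha, hb, Int.cast_inj, ← sub_eq_zero, ← Int.abs_lt_one_iff]
  exact_mod_cast hdist

theorem isAffineSemigroup_closure {S : Finset (V n)} (hS : (S : Set (V n)) ⊆ intPts n) :
    IsAffineSemigroup (AddSubmonoid.closure (S : Set (V n)) : Set (V n)) :=
  ⟨⟨S, rfl⟩, isDiscreteSet_of_subset_intPts (diffSet_subset_intPts (closure_subset_intPts hS))⟩

theorem isPositive_closure {S : Set (V n)} (f : V n →ₗ[ℝ] ℝ) (hf : ∀ s ∈ S, 0 < f s) :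
    IsPositive (AddSubmonoid.closure S : Set (V n)) := by
  have key : ∀ x ∈ AddSubmonoid.closure S, x = 0 ∨ 0 < f x := by
    intro x hx
    induction hx using AddSubmonoid.closure_induction with
    | mem x hx => exact Or.inr (hf x hx)
    | zero => exact Or.inl rfl
    | add x y _ _ hx hy =>
      rcases hx with rfl | hx
      · simpa using hy
      rcases hy with rfl | hy
      · simpa using Or.inr hx
      exact Or.inr (by rw [map_add]; positivity)
  intro x hx hnx
  rcases key x hx with h | h
  · exact h
  rcases key (-x) hnx with h' | h'
  · exact neg_eq_zero.mp h'
  · rw [map_neg] at h'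
    linarith

theorem mem_dualSemigroup_closure {S : Set (V n)} (hS : Submodule.span ℝ S = ⊤) {z : V n}
    (hz : ∀ s ∈ S, ∃ m : ℕ, s ⬝ᵥ z = m) :
    z ∈ dualSemigroup (AddSubmonoid.closure S : Set (V n)) := by
  have key : ∀ x ∈ AddSubmonoid.closure S, ∃ m : ℕ, x ⬝ᵥ z = m := by
    intro x hx
    induction hx using AddSubmonoid.closure_induction with
    | mem x hx => exact hz x hx
    | zero => exact ⟨0, by simp⟩
    | add x y _ _ hx hy =>
      obtain ⟨a, ha⟩ := hx
      obtain ⟨b, hb⟩ := hy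
      exact ⟨a + b, by simp [add_dotProduct, ha, hb]⟩
  refine ⟨⟨?_, ?_⟩, ?_⟩
  · have hsub : (AddSubmonoid.closure S : Set (V n)) ⊆ diffSet (AddSubmonoid.closure S) :=
      fun x hx => ⟨x, hx, 0, AddSubmonoid.zero_mem _, (sub_zero x).symm⟩
    have hspan := Submodule.span_mono (R := ℝ) hsub
    rw [Submodule.span_closure, hS, top_le_iff] at hspan
    exact hspan ▸ Submodule.mem_top
  · rintro _ ⟨x, hx, y, hy, rfl⟩
    obtain ⟨a, ha⟩ := key x hx
    obtain ⟨b, hb⟩ := key y hy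
    exact ⟨a - b, by rw [dotProduct_comm, sub_dotProduct, ha, hb]; push_cast; ring⟩
  · rintro _ ⟨k, c, v, hc, hv, rfl⟩
    rw [sum_dotProduct]
    refine Finset.sum_nonneg fun i _ => ?_
    obtain ⟨a, ha⟩ := key (v i) (hv i)
    rw [smul_dotProduct, ha, smul_eq_mul]
    exact mul_nonneg (hc i) a.cast_nonneg

end Closure

theorem Pell.Solution₁.x_zpow_eq_one_iff {d : ℤ} (hd : d ≠ 0) {a : Pell.Solution₁ d}
    (hax : 0 < a.x) (hay : 0 < a.y) (k : ℤ) : (a ^ k).x = 1 ↔ k = 0 := by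
  refine ⟨fun h => ?_, fun h => by rw [h, zpow_zero, Pell.Solution₁.x_one]⟩
  have hsign := Pell.Solution₁.sign_y_zpow_eq_sign_of_x_pos_of_y_pos hax hay k
  rw [Pell.Solution₁.eq_one_of_x_eq_one hd h, Pell.Solution₁.y_one, Int.sign_zero] at hsign
  exact Int.sign_eq_zero_iff_zero.mp hsign.symm

section PellSemigroup

open Pell

variable {d : ℤ}

def pellPoint (a : Solution₁ d) : V 2 := ![a.x, a.y]

def pellDualPoint (a : Solution₁ d) : V 2 := ![a.x, d * a.y]

theorem pellPoint_dotProduct_pellDualPoint (a b : Solution₁ d) :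
    pellPoint a ⬝ᵥ pellDualPoint b = ((a * b).x : ℝ) := by
  simp [pellPoint, pellDualPoint, dotProduct, Fin.sum_univ_two, Solution₁.x_mul]
  ring

theorem pellPoint_mem_intPts (a : Solution₁ d) : pellPoint a ∈ intPts 2 := by
  intro j
  fin_cases j
  exacts [⟨a.x, rfl⟩, ⟨a.y, rfl⟩]

theorem span_pellPoint_one_pellPoint_eq_top {a : Solution₁ d} (hay : a.y ≠ 0) :
    Submodule.span ℝ {pellPoint (1 : Solution₁ d), pellPoint a} = ⊤ := by
  refine eq_top_iff.mpr fun v _ => ?_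
  have hy : (a.y : ℝ) ≠ 0 := Int.cast_ne_zero.mpr hay
  have hv : v = (v 0 - a.x * v 1 / a.y) • pellPoint (1 : Solution₁ d) +
      (v 1 / a.y) • pellPoint a := by
    ext j
    fin_cases j
    · simp [pellPoint, Solution₁.x_one, Solution₁.y_one]
      field_simp
      ring
    · simp [pellPoint, Solution₁.x_one, Solution₁.y_one]
      field_simp
  rw [hv]
  exact add_mem (Submodule.smul_mem _ _ (Submodule.subset_span (by simp)))
    (Submodule.smul_mem _ _ (Submodule.subset_span (by simp)))

def pellGenerators (a : Solution₁ d) (m : ℕ) : Finset (V 2) :=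
  (Finset.range m).image fun i => pellPoint (a ^ i)

def pellSemigroup (a : Solution₁ d) (m : ℕ) : Set (V 2) :=
  AddSubmonoid.closure (pellGenerators a m : Set (V 2))

theorem pellPoint_pow_mem_pellSemigroup (a : Solution₁ d) {m i : ℕ} (hi : i < m) :
    pellPoint (a ^ i) ∈ pellSemigroup a m :=
  AddSubmonoid.subset_closure (Finset.mem_image_of_mem _ (Finset.mem_range.mpr hi))

theorem isAffineSemigroup_pellSemigroup (a : Solution₁ d) (m : ℕ) :
    IsAffineSemigroup (pellSemigroup a m) :=
  isAffineSemigroup_closure fun _ hp => by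
    obtain ⟨i, -, rfl⟩ := Finset.mem_image.mp hp
    exact pellPoint_mem_intPts _

theorem isPositive_pellSemigroup {a : Solution₁ d} (hax : 0 < a.x) (m : ℕ) :
    IsPositive (pellSemigroup a m) :=
  isPositive_closure (LinearMap.proj 0) fun _ hp => by
    obtain ⟨i, -, rfl⟩ := Finset.mem_image.mp hp
    simpa [pellPoint] using Solution₁.x_pow_pos hax i

theorem span_pellGenerators_eq_top {a : Solution₁ d} (hay : a.y ≠ 0) {m : ℕ} (hm : 2 ≤ m) :
    Submodule.span ℝ (pellGenerators a m : Set (V 2)) = ⊤ := by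
  refine eq_top_iff.mpr <|
    (span_pellPoint_one_pellPoint_eq_top hay).ge.trans (Submodule.span_mono ?_)
  rintro _ (rfl | rfl)
  · exact Finset.mem_image.mpr ⟨0, Finset.mem_range.mpr (by omega), by rw [pow_zero]⟩
  · exact Finset.mem_image.mpr ⟨1, Finset.mem_range.mpr hm, by rw [pow_one]⟩

theorem finrank_span_pellSemigroup {a : Solution₁ d} (hay : a.y ≠ 0) {m : ℕ} (hm : 2 ≤ m) :
    Module.finrank ℝ (Submodule.span ℝ (pellSemigroup a m)) = 2 := by
  rw [pellSemigroup, Submodule.span_closure, span_pellGenerators_eq_top hay hm, finrank_top]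
  simp

theorem pellDualPoint_zpow_mem_dualSemigroup {a : Solution₁ d} (hax : 0 < a.x) (hay : a.y ≠ 0)
    {m : ℕ} (hm : 2 ≤ m) (k : ℤ) : pellDualPoint (a ^ k) ∈ dualSemigroup (pellSemigroup a m) := by
  refine mem_dualSemigroup_closure (span_pellGenerators_eq_top hay hm) fun _ hp => ?_
  obtain ⟨i, -, rfl⟩ := Finset.mem_image.mp hp
  rw [pellPoint_dotProduct_pellDualPoint, ← zpow_natCast, ← _root_.zpow_add]
  lift (a ^ ((i : ℤ) + k)).x to ℕ using (Solution₁.x_zpow_pos hax _).le with x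
  exact ⟨x, by simp⟩

theorem pellPoint_dotProduct_pellDualPoint_eq_one_iff (hd : d ≠ 0) {a : Solution₁ d}
    (hax : 0 < a.x) (hay : 0 < a.y) (i j : ℕ) :
    pellPoint (a ^ i) ⬝ᵥ pellDualPoint (a ^ (-(j : ℤ))) = 1 ↔ i = j := by
  rw [pellPoint_dotProduct_pellDualPoint, ← zpow_natCast, ← _root_.zpow_add, Int.cast_eq_one,
    Solution₁.x_zpow_eq_one_iff hd hax hay]
  omega

end PellSemigroup

/-- For every `k` there exists a 2-dimensional positive affine semigroup
all of whose lifts have size at least `k`. -/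
theorem exists_semigroup_with_large_lifts (k : ℕ) :
    ∃ (n : ℕ) (Γ : Set (V n)), IsAffineSemigroup Γ ∧ IsPositive Γ ∧
      Module.finrank ℝ (Submodule.span ℝ Γ) = 2 ∧
      ∀ (N : ℕ) (Γ' : Set (V N)) (ι : (V n) →ₗ[ℝ] (V N)) (A : Set (V N)),
        IsLift Γ Γ' ι → IsMinGenSet A Γ' → k ≤ A.ncard := by
  let u : Pell.Solution₁ 2 := .mk 3 2 (by norm_num)
  have hux : 0 < u.x := by simp [u]
  have huy : 0 < u.y := by simp [u]
  let m := k * 2 ^ k + 2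
  refine ⟨2, pellSemigroup u m, isAffineSemigroup_pellSemigroup u m,
    isPositive_pellSemigroup hux m, finrank_span_pellSemigroup huy.ne' (by omega),
    fun N Γ' ι A hι hA => ?_⟩
  have hm := hι.card_le_ncard_mul_two_pow hA
    (fun i : Fin m => pellPoint (u ^ (i : ℕ))) (fun j => pellDualPoint (u ^ (-(j : ℤ))))
    (fun i => pellPoint_pow_mem_pellSemigroup u i.2)
    (fun j => pellDualPoint_zpow_mem_dualSemigroup hux huy.ne' (by omega) _)
    (fun i j => (pellPoint_dotProduct_pellDualPoint_eq_one_iff two_ne_zero hux huy i j).trans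
      Fin.val_inj)
  by_contra! hlt
  have : A.ncard * 2 ^ A.ncard ≤ k * 2 ^ k :=
    Nat.mul_le_mul hlt.le (Nat.pow_le_pow_right two_pos hlt.le)
  rw [Fintype.card_fin] at hm
  omega

end
end
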